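/- arXiv:2005.13242 — 2 statements merged into one kernel-verified Lean document; each statement's English description precedes it below -/
import Mathlib

section
/- If W is a resolving set of the Petersen graph with |W| = 3 and u_1 ∈ W, then W is one of the six sets W_1 = {u_1,w_2,w_3}, W_2 = {u_1,u_4,w_2}, W_3 = {u_1,w_4,w_5}, W_4 = {u_1,u_3,w_5}, W_5 = {u_1,u_4,w_3}, W_6 = {u_1,u_3,w_4}. -/
open SimpleGraph

/-- `W` is a resolving set of `G`: every pair of distinct vertices is
distinguished by its distance to some vertex of `W`. -/
def IsResolving {V : Type*} (G : SimpleGraph V) (W : Set V) : Prop :=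
  ∀ x y : V, x ≠ y → ∃ z ∈ W, G.dist x z ≠ G.dist y z

/-- Vertices of the Petersen graph: `Sum.inl i` is the outer vertex `u_{i+1}` and
`Sum.inr i` is the inner vertex `w_{i+1}` (0-based indexing of the paper's labels). -/
abbrev PetersenVert := Fin 5 ⊕ Fin 5

/-- The relation generating the edges of the Petersen graph:
`u_i u_{i+1}`, `u_i w_i` and `w_i w_{i+2}`, indices modulo 5. -/
def petersenRel : PetersenVert → PetersenVert → Prop
  | Sum.inl i, Sum.inl j => j = i + 1
  | Sum.inl i, Sum.inr j => i = j
  | Sum.inr i, Sum.inr j => j = i + 2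
  | _, _ => False

/-- The Petersen graph. -/
def petersen : SimpleGraph PetersenVert := SimpleGraph.fromRel petersenRel

instance : DecidableRel petersenRel := fun x y => by
  rcases x with i | i <;> rcases y with j | j <;> simp only [petersenRel] <;> infer_instance

instance : DecidableRel petersen.Adj := fun x y =>
  decidable_of_iff (x ≠ y ∧ (petersenRel x y ∨ petersenRel y x))
    (SimpleGraph.fromRel_adj petersenRel x y).symm

def pdist (x y : PetersenVert) : ℕ :=
  if x = y then 0 else if petersen.Adj x y then 1 else 2

lemma common_nbr : ∀ x y : PetersenVert, x ≠ y → ¬ petersen.Adj x y →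
    ∃ z, petersen.Adj x z ∧ petersen.Adj z y := by decide

lemma dist_eq (x y : PetersenVert) : petersen.dist x y = pdist x y := by
  unfold pdist
  split_ifs with h1 h2
  · rw [h1, dist_self]
  · exact dist_eq_one_iff_adj.mpr h2
  · obtain ⟨z, hxz, hzy⟩ := common_nbr x y h1 h2
    have hle : petersen.dist x y ≤ 2 := by
      simpa using petersen.dist_le (hxz.toWalk.append hzy.toWalk)
    have h0 : 0 < petersen.dist x y :=
      Reachable.pos_dist_of_ne ⟨hxz.toWalk.append hzy.toWalk⟩ h1
    have hne1 : petersen.dist x y ≠ 1 := fun h => h2 (dist_eq_one_iff_adj.mp h)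
    omega

lemma key : ∀ a b : PetersenVert,
    (∀ x y : PetersenVert, x ≠ y →
      pdist x (Sum.inl 0) ≠ pdist y (Sum.inl 0) ∨ pdist x a ≠ pdist y a ∨
        pdist x b ≠ pdist y b) →
    ({Sum.inl 0, a, b} : Finset PetersenVert) = {Sum.inl 0, Sum.inr 1, Sum.inr 2} ∨
    ({Sum.inl 0, a, b} : Finset PetersenVert) = {Sum.inl 0, Sum.inl 3, Sum.inr 1} ∨
    ({Sum.inl 0, a, b} : Finset PetersenVert) = {Sum.inl 0, Sum.inr 3, Sum.inr 4} ∨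
    ({Sum.inl 0, a, b} : Finset PetersenVert) = {Sum.inl 0, Sum.inl 2, Sum.inr 4} ∨
    ({Sum.inl 0, a, b} : Finset PetersenVert) = {Sum.inl 0, Sum.inl 3, Sum.inr 2} ∨
    ({Sum.inl 0, a, b} : Finset PetersenVert) = {Sum.inl 0, Sum.inl 2, Sum.inr 3} := by
  decide

lemma main_aux (W : Set PetersenVert) (hW : IsResolving petersen W)
    (a b : PetersenVert) (hWeq : W = {Sum.inl 0, a, b}) :
    W = {Sum.inl 0, Sum.inr 1, Sum.inr 2} ∨
    W = {Sum.inl 0, Sum.inl 3, Sum.inr 1} ∨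
    W = {Sum.inl 0, Sum.inr 3, Sum.inr 4} ∨
    W = {Sum.inl 0, Sum.inl 2, Sum.inr 4} ∨
    W = {Sum.inl 0, Sum.inl 3, Sum.inr 2} ∨
    W = {Sum.inl 0, Sum.inl 2, Sum.inr 3} := by
  have hres : ∀ x y : PetersenVert, x ≠ y →
      pdist x (Sum.inl 0) ≠ pdist y (Sum.inl 0) ∨ pdist x a ≠ pdist y a ∨
        pdist x b ≠ pdist y b := by
    intro x y hxy
    obtain ⟨z, hz, hne⟩ := hW x y hxy
    rw [hWeq] at hz
    rw [dist_eq, dist_eq] at hne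
    simp only [Set.mem_insert_iff, Set.mem_singleton_iff] at hz
    rcases hz with h | h | h <;> subst h <;> tauto
  have hset : W = (({Sum.inl 0, a, b} : Finset PetersenVert) : Set PetersenVert) := by
    rw [hWeq]; simp
  rcases key a b hres with h | h | h | h | h | h <;> rw [h] at hset <;>
    simp only [Finset.coe_insert, Finset.coe_singleton] at hset <;> tauto

/-- If `W` is a resolving set of the Petersen graph with `|W| = 3` containing `u_1`,
then `W` is one of the six sets `W_1,…,W_6` of Lemma 4.5. -/
theorem basis_petersen_through_u1 (W : Set PetersenVert)
    (hW : IsResolving petersen W) (hcard : W.ncard = 3)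
    (hu1 : Sum.inl 0 ∈ W) :
    W = {Sum.inl 0, Sum.inr 1, Sum.inr 2} ∨
    W = {Sum.inl 0, Sum.inl 3, Sum.inr 1} ∨
    W = {Sum.inl 0, Sum.inr 3, Sum.inr 4} ∨
    W = {Sum.inl 0, Sum.inl 2, Sum.inr 4} ∨
    W = {Sum.inl 0, Sum.inl 3, Sum.inr 2} ∨
    W = {Sum.inl 0, Sum.inl 2, Sum.inr 3} := by
  obtain ⟨a, b, c, hab, hac, hbc, hWeq⟩ := Set.ncard_eq_three.mp hcard
  rw [hWeq] at hu1
  simp only [Set.mem_insert_iff, Set.mem_singleton_iff] at hu1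
  rcases hu1 with h | h | h
  · exact main_aux W hW b c (by rw [hWeq, h])
  · exact main_aux W hW a c (by rw [hWeq, ← h, Set.insert_comm])
  · exact main_aux W hW a b (by rw [hWeq, ← h, Set.pair_comm, Set.insert_comm])
end

section
/- Let s ≥ 3 be odd and t ≥ 3. Let x = (i, j) and y = (i', j) be vertices of C_s □ C_t lying in the same copy of C_s whose first coordinates i and i' are at distance (s−1)/2 in C_s (i.e., x and y are diametral in that copy of C_s), and let z = (i, j') where j' is adjacent to j in C_t. Then {x, y, z} is a resolving set of C_s □ C_t (and hence a metric basis, since dim(C_s □ C_t) = 3). -/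
/-!
Distances in `C_s □ C_t` add coordinatewise, and in `C_n` the distance between `u` and `v` is
`min k (n - k)` for `k = v - u`; from this, any two vertices of `C_n` that are neither equal nor
antipodal resolve `C_n`. For a vertex `(a, b)`, the distances to `x` and `y` share the summand
`d(b, j)`. Since `a` lies on one of the two arcs between `i` and `i'`, of lengths `(s - 1) / 2` and
`(s + 1) / 2`, the sum `d(a, i) + d(a, i')` takes only two consecutive values; a parity argument
then shows that two vertices with the same distances to `x, y, z` have the same `d(a, i)`,
`d(a, i')`, `d(b, j)`, `d(b, j')`, so the pairs `i, i'` and `j, j'` identify them.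
-/

open SimpleGraph

namespace Fin

variable {n : ℕ}

lemma val_add_cases (a b : Fin n) :
    (a + b).val = a.val + b.val ∨ (a + b).val + n = a.val + b.val := by
  rw [val_add_eq_ite]
  split_ifs <;> omega

-- `min k (n - k)`, written with `-k` so that `k = 0` needs no case split.
def cycleNorm (k : Fin n) : ℕ := min k.val (-k).val

lemma cycleNorm_neg (k : Fin n) : (-k).cycleNorm = k.cycleNorm := by
  rw [cycleNorm, cycleNorm, neg_neg, min_comm]

variable [NeZero n]

lemma val_neg_add_val_cases (k : Fin n) : (-k).val + k.val = 0 ∨ (-k).val + k.val = n := by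
  have := val_add_cases (-k) k
  rw [neg_add_cancel, val_zero] at this
  omega

lemma cycleNorm_add_le (a b : Fin n) : (a + b).cycleNorm ≤ a.cycleNorm + b.cycleNorm := by
  have := val_add_cases a b
  have := val_neg_add_val_cases a; have := val_neg_add_val_cases b
  have := val_neg_add_val_cases (a + b)
  simp only [cycleNorm]
  omega

lemma cycleNorm_add_cycleNorm_add_cycleNorm_add_le (a b : Fin n) :
    a.cycleNorm + b.cycleNorm + (a + b).cycleNorm ≤ n := by
  have := val_add_cases a b
  have := val_neg_add_val_cases a; have := val_neg_add_val_cases b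
  have := val_neg_add_val_cases (a + b)
  simp only [cycleNorm]
  omega

lemma eq_or_eq_neg_of_cycleNorm_eq {a b : Fin n} (h : a.cycleNorm = b.cycleNorm) :
    b = a ∨ b = -a := by
  have := val_neg_add_val_cases a; have := val_neg_add_val_cases b
  simp only [cycleNorm] at h
  simp only [Fin.ext_iff]
  omega

lemma two_mul_cycleNorm_of_add_self_eq_zero {m : Fin n} (hm : m ≠ 0) (h : m + m = 0) :
    2 * m.cycleNorm = n := by
  have hsum := val_add_cases m m
  rw [h, val_zero] at hsum
  have := val_neg_add_val_cases m
  have := Fin.val_ne_of_ne hm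
  rw [val_zero] at this
  simp only [cycleNorm]
  omega

lemma eq_of_cycleNorm_eq_of_cycleNorm_sub_eq {a b m : Fin n} (hm : m ≠ 0)
    (hanti : 2 * m.cycleNorm ≠ n) (ha : a.cycleNorm = b.cycleNorm)
    (hsub : (a - m).cycleNorm = (b - m).cycleNorm) : a = b := by
  obtain rfl | rfl := eq_or_eq_neg_of_cycleNorm_eq ha
  · rfl
  rw [← cycleNorm_neg (-a - m), neg_sub, sub_neg_eq_add, add_comm] at hsub
  obtain h | h := eq_or_eq_neg_of_cycleNorm_eq hsub
  · rw [sub_eq_add_neg] at h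
    exact absurd (two_mul_cycleNorm_of_add_self_eq_zero hm
      (eq_neg_iff_add_eq_zero.1 (add_left_cancel h))) hanti
  · rw [neg_sub, sub_eq_add_neg, add_comm m] at h
    exact add_right_cancel h

end Fin

namespace SimpleGraph

lemma dist_boxProd {α β : Type*} {G : SimpleGraph α} {H : SimpleGraph β}
    (hG : G.Preconnected) (hH : H.Preconnected) (x y : α × β) :
    (G □ H).dist x y = G.dist x.1 y.1 + H.dist x.2 y.2 := by
  have hGH : (G □ H).Reachable x y := reachable_boxProd.2 ⟨hG _ _, hH _ _⟩
  rw [← Nat.cast_inj (R := ℕ∞), Nat.cast_add, hGH.coe_dist_eq_edist,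
    (hG _ _).coe_dist_eq_edist, (hH _ _).coe_dist_eq_edist, edist_boxProd]

variable {n : ℕ} [NeZero n]

lemma cycleGraph_adj_iff_cycleNorm {u v : Fin n} :
    (cycleGraph n).Adj u v ↔ (v - u).cycleNorm = 1 := by
  have := (v - u).val_neg_add_val_cases
  rw [cycleGraph_adj', ← neg_sub v u, Fin.cycleNorm]
  omega

lemma cycleGraph_dist_le_val_sub (u v : Fin n) : (cycleGraph n).dist u v ≤ (v - u).val := by
  induction hk : (v - u).val generalizing v with
  | zero => simp [sub_eq_zero.1 (Fin.ext hk)]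
  | succ k ih =>
    have hn : 1 < n := by have := (v - u).isLt; omega
    have hone : (1 : Fin n).val = 1 := by rw [Fin.val_one', Nat.mod_eq_of_lt hn]
    have hadj : (cycleGraph n).Adj (v - 1) v := by
      rw [cycleGraph_adj', sub_sub_cancel]
      exact Or.inr hone
    have hprev : (v - 1 - u).val = k := by
      have := (v - 1 - u).val_add_cases 1
      rw [show v - 1 - u + 1 = v - u by abel, hk, hone] at this
      have := (v - 1 - u).isLt
      omega
    calc (cycleGraph n).dist u v
        ≤ (cycleGraph n).dist u (v - 1) + (cycleGraph n).dist (v - 1) v :=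
          hadj.reachable.dist_triangle_right u
      _ ≤ k + 1 := by rw [dist_eq_one_iff_adj.2 hadj]; exact Nat.add_le_add_right (ih _ hprev) 1

lemma cycleNorm_le_length {u v : Fin n} (p : (cycleGraph n).Walk u v) :
    (v - u).cycleNorm ≤ p.length := by
  induction p with
  | nil => simp [Fin.cycleNorm]
  | @cons u w v hadj p ih =>
    rw [Walk.length_cons, ← sub_add_sub_cancel v w u]
    exact (Fin.cycleNorm_add_le _ _).trans
      (by rw [cycleGraph_adj_iff_cycleNorm.1 hadj]; omega)

lemma cycleGraph_dist (u v : Fin n) : (cycleGraph n).dist u v = (v - u).cycleNorm := by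
  refine le_antisymm (le_min (cycleGraph_dist_le_val_sub u v) ?_) ?_
  · rw [dist_comm, neg_sub]
    exact cycleGraph_dist_le_val_sub v u
  · obtain ⟨p, hp⟩ := (cycleGraph_preconnected u v).exists_walk_length_eq_dist
    exact hp ▸ cycleNorm_le_length p

lemma cycleGraph_dist_add_dist_add_dist_le (u v w : Fin n) :
    (cycleGraph n).dist u w + (cycleGraph n).dist w v + (cycleGraph n).dist u v ≤ n := by
  rw [cycleGraph_dist, cycleGraph_dist, cycleGraph_dist, ← sub_add_sub_cancel v w u,
    add_comm (v - w)]
  exact Fin.cycleNorm_add_cycleNorm_add_cycleNorm_add_le _ _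

lemma cycleGraph_eq_of_dist_eq {u v w w' : Fin n} (huv : u ≠ v)
    (hanti : 2 * (cycleGraph n).dist u v ≠ n)
    (hu : (cycleGraph n).dist w u = (cycleGraph n).dist w' u)
    (hv : (cycleGraph n).dist w v = (cycleGraph n).dist w' v) : w = w' := by
  simp only [cycleGraph_dist] at hanti hu hv
  rw [← neg_sub w u, ← neg_sub w' u, Fin.cycleNorm_neg, Fin.cycleNorm_neg] at hu
  rw [← neg_sub w v, ← neg_sub w' v, Fin.cycleNorm_neg, Fin.cycleNorm_neg,
    ← sub_sub_sub_cancel_right w v u, ← sub_sub_sub_cancel_right w' v u] at hv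
  exact sub_left_injective <|
    Fin.eq_of_cycleNorm_eq_of_cycleNorm_sub_eq (sub_ne_zero.2 huv.symm) hanti hu hv

end SimpleGraph

/-- For odd `s ≥ 3` and `t ≥ 3`: if `x = (i,j)` and `y = (i',j)` are diametral in a
copy of `C_s` (their first coordinates are at distance `(s-1)/2` in `C_s`) and
`z = (i,j')` with `j'` adjacent to `j` in `C_t`, then `{x,y,z}` is a resolving set
of `C_s □ C_t`. -/
theorem torus_basis_odd (s t : ℕ) (hs : 3 ≤ s) (hodd : Odd s) (ht : 3 ≤ t)
    (i i' : Fin s) (j j' : Fin t)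
    (hdiam : (cycleGraph s).dist i i' = (s - 1) / 2)
    (hadj : (cycleGraph t).Adj j j') :
    IsResolving (cycleGraph s □ cycleGraph t) {(i, j), (i', j), (i, j')} := by
  have : NeZero s := ⟨by omega⟩
  have : NeZero t := ⟨by omega⟩
  obtain ⟨k, rfl⟩ := hodd
  simp only [Nat.add_sub_cancel, Nat.mul_div_cancel_left k two_pos] at hdiam
  have harc (a : Fin (2 * k + 1)) :
      k ≤ (cycleGraph _).dist a i + (cycleGraph _).dist a i' ∧
        (cycleGraph _).dist a i + (cycleGraph _).dist a i' ≤ k + 1 := by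
    have := (cycleGraph_preconnected a i').dist_triangle_right i
    have := cycleGraph_dist_add_dist_add_dist_le i i' a
    rw [dist_comm (u := a)]
    omega
  rintro ⟨a, b⟩ ⟨a', b'⟩ hne
  by_contra! hdist
  have hx := hdist (i, j) (by simp)
  have hy := hdist (i', j) (by simp)
  have hz := hdist (i, j') (by simp)
  simp only [dist_boxProd cycleGraph_preconnected cycleGraph_preconnected] at hx hy hz
  -- The two sums in `harc a`, `harc a'` differ by `2 * (dist b' j - dist b j)`, so they agree.
  have hbj : (cycleGraph t).dist b j = (cycleGraph t).dist b' j := by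
    have := harc a; have := harc a'; omega
  have hii' : i ≠ i' := by rintro rfl; rw [dist_self] at hdiam; omega
  have ha : a = a' := cycleGraph_eq_of_dist_eq hii' (by omega) (by omega) (by omega)
  subst ha
  have hb : b = b' := cycleGraph_eq_of_dist_eq hadj.ne
    (by rw [dist_eq_one_iff_adj.2 hadj]; omega) hbj (by omega)
  exact hne (by rw [hb])
end
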